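/- arXiv:2411.06967 — 3 statements merged into one kernel-verified Lean document; each statement's English description precedes it below -/
import Mathlib

section
/- Let P₀ be the orthogonal projection onto the ground-state eigenspace of a self-adjoint operator H on a finite-dimensional complex Hilbert space, let E₀ be the smallest eigenvalue of H and E₁ the second-smallest eigenvalue (assume H has at least two distinct eigenvalues), and set g = E₁ − E₀. Suppose moreover that P₀ has rank one, and define the state ω₀(A) := tr(P₀ A). Then for every operator A one has ω₀(A* (H A − A H)) ≥ g · (ω₀(A* A) − |ω₀(A)|²). -/
/-!
Since `P₀` is a rank-one orthogonal projection, `P₀ = |ψ⟩⟨ψ|` for a unit vector `ψ`, so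
`ω₀(B) = ⟪ψ, B ψ⟫`; as `H ψ = E₀ ψ`, the claim becomes
`g (‖φ‖² - |⟪ψ, φ⟫|²) ≤ ⟪φ, (H - E₀) φ⟫` for `φ = A ψ`. In an orthonormal eigenbasis
`(uᵢ, μᵢ)` of `H` this is the sum over `i` of
`g (|⟪uᵢ, φ⟫|² - |⟪uᵢ, ψ⟫|² |⟪ψ, φ⟫|²) ≤ (μᵢ - E₀) |⟪uᵢ, φ⟫|²`, using `∑ |⟪uᵢ, ψ⟫|² = 1`.
If `μᵢ = E₀` then `uᵢ` is a multiple of `ψ` and both sides vanish; otherwise `E₁ ≤ μᵢ` and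
`uᵢ ⟂ ψ`.
-/
open Matrix
open scoped InnerProductSpace
open Module Module.End

namespace LinearMap.IsSymmetric

variable {𝕜 E : Type*} [RCLike 𝕜] [NormedAddCommGroup E] [InnerProductSpace 𝕜 E]
  {T : E →ₗ[𝕜] E}

theorem inner_eq_zero_of_eigenvalue_ne (hT : T.IsSymmetric) {u v : E} {μ ν : ℝ}
    (hu : T u = (μ : 𝕜) • u) (hv : T v = (ν : 𝕜) • v) (hμν : μ ≠ ν) : ⟪u, v⟫_𝕜 = 0 := by
  have h : (μ : 𝕜) * ⟪u, v⟫_𝕜 = ν * ⟪u, v⟫_𝕜 := by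
    rw [← RCLike.conj_ofReal μ, ← inner_smul_left, ← hu, hT, hv, inner_smul_right]
  by_contra hne
  exact hμν (RCLike.ofReal_injective (mul_right_cancel₀ hne h))

theorem re_inner_sub_smul_eq_sum [FiniteDimensional 𝕜 E] (hT : T.IsSymmetric) (c : ℝ) (φ : E) :
    RCLike.re ⟪φ, T φ - (c : 𝕜) • φ⟫_𝕜 =
      ∑ i, (hT.eigenvalues rfl i - c) * ‖⟪hT.eigenvectorBasis rfl i, φ⟫_𝕜‖ ^ 2 := by
  set b := hT.eigenvectorBasis rfl
  have hterm : ∀ i, ⟪φ, b i⟫_𝕜 * ⟪b i, T φ - (c : 𝕜) • φ⟫_𝕜 =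
      (((hT.eigenvalues rfl i - c) * ‖⟪b i, φ⟫_𝕜‖ ^ 2 : ℝ) : 𝕜) := by
    intro i
    rw [inner_sub_right, ← hT, hT.apply_eigenvectorBasis, inner_smul_left, inner_smul_right,
      RCLike.conj_ofReal, ← sub_mul, ← inner_conj_symm, mul_left_comm, RCLike.conj_mul]
    push_cast
    rfl
  rw [← b.sum_inner_mul_inner, Finset.sum_congr rfl fun i _ => hterm i, map_sum]
  simp only [RCLike.ofReal_re]

variable {E₀ E₁ : ℝ} {ψ : E}

theorem spectral_gap_inequality_component (hT : T.IsSymmetric) (hψ : ‖ψ‖ = 1)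
    (hψ₀ : T ψ = (E₀ : 𝕜) • ψ) (hground : eigenspace T (E₀ : 𝕜) ≤ 𝕜 ∙ ψ)
    {u : E} {μ : ℝ} (hu : T u = (μ : 𝕜) • u) (hμ : μ = E₀ ∨ E₁ ≤ μ) (φ : E) :
    (E₁ - E₀) * (‖⟪u, φ⟫_𝕜‖ ^ 2 - ‖⟪u, ψ⟫_𝕜‖ ^ 2 * ‖⟪ψ, φ⟫_𝕜‖ ^ 2)
      ≤ (μ - E₀) * ‖⟪u, φ⟫_𝕜‖ ^ 2 := by
  by_cases hμ₀ : μ = E₀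
  · subst hμ₀
    obtain ⟨c, rfl⟩ := Submodule.mem_span_singleton.mp (hground (mem_eigenspace_iff.mpr hu))
    simp [inner_smul_left, hψ, mul_pow]
  · have hE₁ : E₁ ≤ μ := hμ.resolve_left hμ₀
    rw [hT.inner_eq_zero_of_eigenvalue_ne hu hψ₀ hμ₀, norm_zero, zero_pow two_ne_zero, zero_mul,
      sub_zero]
    exact mul_le_mul_of_nonneg_right (by linarith) (by positivity)

theorem spectral_gap_inequality [FiniteDimensional 𝕜 E] (hT : T.IsSymmetric) (hψ : ‖ψ‖ = 1)
    (hψ₀ : T ψ = (E₀ : 𝕜) • ψ) (hground : eigenspace T (E₀ : 𝕜) ≤ 𝕜 ∙ ψ)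
    (hgap : ∀ μ : ℝ, HasEigenvalue T μ → μ = E₀ ∨ E₁ ≤ μ) (φ : E) :
    (E₁ - E₀) * (‖φ‖ ^ 2 - ‖⟪ψ, φ⟫_𝕜‖ ^ 2) ≤ RCLike.re ⟪φ, T φ - (E₀ : 𝕜) • φ⟫_𝕜 := by
  set b := hT.eigenvectorBasis rfl
  calc (E₁ - E₀) * (‖φ‖ ^ 2 - ‖⟪ψ, φ⟫_𝕜‖ ^ 2)
      = ∑ i, (E₁ - E₀) * (‖⟪b i, φ⟫_𝕜‖ ^ 2 - ‖⟪b i, ψ⟫_𝕜‖ ^ 2 * ‖⟪ψ, φ⟫_𝕜‖ ^ 2) := by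
        rw [← Finset.mul_sum, Finset.sum_sub_distrib, ← Finset.sum_mul,
          b.sum_sq_norm_inner_right, b.sum_sq_norm_inner_right, hψ, one_pow, one_mul]
    _ ≤ ∑ i, (hT.eigenvalues rfl i - E₀) * ‖⟪b i, φ⟫_𝕜‖ ^ 2 :=
        Finset.sum_le_sum fun i _ => hT.spectral_gap_inequality_component hψ hψ₀ hground
          (hT.apply_eigenvectorBasis rfl i) (hgap _ (hT.hasEigenvalue_eigenvalues rfl i)) φ
    _ = RCLike.re ⟪φ, T φ - (E₀ : 𝕜) • φ⟫_𝕜 := (hT.re_inner_sub_smul_eq_sum E₀ φ).symm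

end LinearMap.IsSymmetric

section

variable {𝕜 E : Type*} [RCLike 𝕜] [NormedAddCommGroup E] [InnerProductSpace 𝕜 E]

theorem LinearMap.IsSymmetricProjection.exists_eq_rankOne {P : E →ₗ[𝕜] E}
    (hP : P.IsSymmetricProjection) (hr : finrank 𝕜 (LinearMap.range P) = 1) :
    ∃ ψ : E, ‖ψ‖ = 1 ∧ P = InnerProductSpace.rankOne 𝕜 ψ ψ := by
  obtain ⟨⟨v, hv⟩, hne, -⟩ := finrank_eq_one_iff'.mp hr
  have hv0 : v ≠ 0 := fun h => hne (Subtype.ext h)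
  set ψ := (‖v‖⁻¹ : 𝕜) • v
  have hψmem : ψ ∈ LinearMap.range P := Submodule.smul_mem _ _ hv
  have hPψ : P ψ = ψ := by
    obtain ⟨w, hw⟩ := hψmem
    rw [← hw, ← Module.End.mul_apply, hP.isIdempotentElem.eq]
  have hψ : ‖ψ‖ = 1 := norm_smul_inv_norm hv0
  refine ⟨ψ, hψ, LinearMap.ext fun x => ?_⟩
  have hψ0 : (⟨ψ, hψmem⟩ : LinearMap.range P) ≠ 0 := by
    rw [ne_eq, Submodule.mk_eq_zero, ← norm_eq_zero, hψ]
    exact one_ne_zero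
  obtain ⟨c, hc⟩ := (finrank_eq_one_iff_of_nonzero' _ hψ0).mp hr ⟨P x, P.mem_range_self x⟩
  have hcψ : c • ψ = P x := congrArg Subtype.val hc
  have hcx : ⟪ψ, x⟫_𝕜 = c := by
    rw [← hPψ, hP.isSymmetric, ← hcψ, inner_smul_right, inner_self_eq_one_of_norm_eq_one hψ,
      mul_one]
  rw [ContinuousLinearMap.coe_coe, InnerProductSpace.rankOne_apply, hcx, hcψ]

end

section

variable {𝕜 n : Type*} [RCLike 𝕜] [Fintype n] [DecidableEq n]

theorem Matrix.rank_eq_finrank_range_toEuclideanLin (P : Matrix n n 𝕜) :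
    P.rank = finrank 𝕜 (LinearMap.range (toEuclideanLin P)) :=
  P.rank_eq_finrank_range_toLin (PiLp.basisFun 2 𝕜 n) (PiLp.basisFun 2 𝕜 n)

theorem Matrix.isSymmetricProjection_toEuclideanLin {P : Matrix n n 𝕜} (hPP : P * P = P)
    (hP : P.IsHermitian) :
    (toEuclideanLin P).IsSymmetricProjection :=
  ⟨by rw [IsIdempotentElem, Module.End.mul_eq_comp, ← toLpLin_mul_same, hPP],
    isSymmetric_toEuclideanLin_iff.mpr hP⟩

theorem Matrix.trace_mul_eq_inner_of_toEuclideanLin_eq_rankOne {P : Matrix n n 𝕜}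
    {ψ : EuclideanSpace 𝕜 n} (hP : toEuclideanLin P = InnerProductSpace.rankOne 𝕜 ψ ψ)
    (B : Matrix n n 𝕜) :
    (P * B).trace = ⟪ψ, toEuclideanLin B ψ⟫_𝕜 := by
  rw [← toEuclideanLin.symm_apply_apply P, hP, InnerProductSpace.symm_toEuclideanLin_rankOne,
    trace_mul_comm, mul_vecMulVec, trace_vecMulVec]
  rfl

theorem Matrix.inner_toEuclideanLin_conjTranspose_mul (A B : Matrix n n 𝕜)
    (x y : EuclideanSpace 𝕜 n) :
    ⟪x, toEuclideanLin (Aᴴ * B) y⟫_𝕜 = ⟪toEuclideanLin A x, toEuclideanLin B y⟫_𝕜 := by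
  rw [toLpLin_mul_same, LinearMap.comp_apply, toEuclideanLin_conjTranspose_eq_adjoint,
    LinearMap.adjoint_inner_right]

end

theorem stmt0_general {n : ℕ} (H P₀ : Matrix (Fin n) (Fin n) ℂ)
    (hH : H.IsHermitian)
    (E₀ E₁ : ℝ)
    (hPproj : P₀ * P₀ = P₀) (hPherm : P₀.IsHermitian)
    (hPrange : ∀ v : Fin n → ℂ, P₀.mulVec v = v ↔ H.mulVec v = (E₀ : ℂ) • v)
    (hrank : P₀.rank = 1)
    (hE0min : ∀ (v : Fin n → ℂ) (μ : ℂ), v ≠ 0 → H.mulVec v = μ • v →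
      μ = (E₀ : ℂ) ∨ (μ.im = 0 ∧ E₁ ≤ μ.re))
    (A : Matrix (Fin n) (Fin n) ℂ) :
    (E₁ - E₀) * (((P₀ * (Aᴴ * A)).trace).re - ‖(P₀ * A).trace‖ ^ 2)
      ≤ ((P₀ * (Aᴴ * (H * A - A * H))).trace).re := by
  set T := toEuclideanLin H
  have hT : T.IsSymmetric := isSymmetric_toEuclideanLin_iff.mpr hH
  obtain ⟨ψ, hψ, hP⟩ := (isSymmetricProjection_toEuclideanLin hPproj hPherm).exists_eq_rankOne
    (by rwa [← rank_eq_finrank_range_toEuclideanLin])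
  have hground : ∀ v, T v = (E₀ : ℂ) • v ↔ ⟪ψ, v⟫_ℂ • ψ = v := fun v => by
    rw [← InnerProductSpace.rankOne_apply, ← ContinuousLinearMap.coe_coe, ← hP, WithLp.ext_iff,
      WithLp.ext_iff]
    exact (hPrange v.ofLp).symm
  have hψ₀ : T ψ = (E₀ : ℂ) • ψ :=
    (hground ψ).2 (by rw [inner_self_eq_one_of_norm_eq_one hψ, one_smul])
  have hsub : eigenspace T (E₀ : ℂ) ≤ ℂ ∙ ψ := fun v hv =>
    Submodule.mem_span_singleton.2 ⟨_, (hground v).1 (mem_eigenspace_iff.1 hv)⟩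
  have hgap : ∀ μ : ℝ, HasEigenvalue T μ → μ = E₀ ∨ E₁ ≤ μ := by
    intro μ hμ
    obtain ⟨v, hv, hv0⟩ := hμ.exists_hasEigenvector
    rcases hE0min v.ofLp μ (by simpa using hv0) (congrArg WithLp.ofLp (mem_eigenspace_iff.1 hv))
      with h | ⟨-, h⟩
    · exact Or.inl (by exact_mod_cast h)
    · exact Or.inr (by simpa using h)
  have hcomm : toEuclideanLin (H * A - A * H) ψ
      = T (toEuclideanLin A ψ) - (E₀ : ℂ) • toEuclideanLin A ψ := by
    rw [map_sub, LinearMap.sub_apply, toLpLin_mul_same, toLpLin_mul_same, LinearMap.comp_apply,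
      LinearMap.comp_apply, hψ₀, map_smul]
  simp only [trace_mul_eq_inner_of_toEuclideanLin_eq_rankOne hP,
    inner_toEuclideanLin_conjTranspose_mul, hcomm]
  have key := hT.spectral_gap_inequality hψ hψ₀ hsub hgap (toEuclideanLin A ψ)
  rwa [← inner_self_eq_norm_sq (𝕜 := ℂ)] at key

/-- Finite-dimensional gapped ground state inequality:
`ω₀(A*[H,A]) ≥ g (ω₀(A*A) − |ω₀(A)|²)` where `ω₀(A) = tr(P₀ A)`,
`P₀` is the rank-one spectral projection of the self-adjoint `H` onto its
lowest eigenvalue `E₀`, and `g = E₁ − E₀` with `E₁` the second-smallest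
eigenvalue of `H`. -/
theorem stmt0 {n : ℕ} (H P₀ : Matrix (Fin n) (Fin n) ℂ)
    (hH : H.IsHermitian)
    (E₀ E₁ : ℝ)
    (hPproj : P₀ * P₀ = P₀) (hPherm : P₀.IsHermitian)
    (hPrange : ∀ v : Fin n → ℂ, P₀.mulVec v = v ↔ H.mulVec v = (E₀ : ℂ) • v)
    (hrank : P₀.rank = 1)
    (hE0min : ∀ (v : Fin n → ℂ) (μ : ℂ), v ≠ 0 → H.mulVec v = μ • v →
      μ = (E₀ : ℂ) ∨ (μ.im = 0 ∧ E₁ ≤ μ.re))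
    (hE1ev : ∃ v : Fin n → ℂ, v ≠ 0 ∧ H.mulVec v = (E₁ : ℂ) • v)
    (hlt : E₀ < E₁)
    (A : Matrix (Fin n) (Fin n) ℂ) :
    (E₁ - E₀) * (((P₀ * (Aᴴ * A)).trace).re - ‖(P₀ * A).trace‖ ^ 2)
      ≤ ((P₀ * (Aᴴ * (H * A - A * H))).trace).re :=
  stmt0_general H P₀ hH E₀ E₁ hPproj hPherm hPrange hrank hE0min A
end

section
/- In the setting of a Banach algebra with norm-one projections (E_k)_{k∈ℕ} onto increasing subalgebras with E_k E_l = E_{min(k,l)}, and decay norms ‖A‖_ν := ‖A‖ + sup_k (1+k)^ν ‖A − E_k A‖: if ν ≥ 1 and ‖A‖_ν < ∞, then lim_{k→∞} ‖A − E_k A‖_{ν−1} = 0. -/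
/-!
Writing `x = A − E_k A`, the relation `E_l E_k = E_{min(l,k)}` gives
`x − E_l x = A − E_{max(k,l)} A`. Hence every term of the `(ν−1)`-decay norm of `x` is at most
`‖A − E_m A‖ (1+m)^{ν−1} ≤ ‖A‖_ν / (1+m)` with `m = max(k,l) ≥ k`, and the norm is `O(1/(1+k))`.
-/

open Filter Topology

noncomputable def decayNorm {V : Type*} [NormedAddCommGroup V] [Module ℝ V]
    (E : ℕ → V →ₗ[ℝ] V) (ν : ℕ) (a : V) : ℝ :=
  ‖a‖ + ⨆ l : ℕ, ‖a - E l a‖ * (1 + (l : ℝ)) ^ ν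

theorem mul_pow_le_div_of_mul_pow_succ_le {x t C : ℝ} {n : ℕ} (ht : 0 < t)
    (h : x * t ^ (n + 1) ≤ C) : x * t ^ n ≤ C / t := by
  rwa [le_div_iff₀ ht, mul_assoc, ← pow_succ]

section DecayNorm

variable {V : Type*} [NormedAddCommGroup V] [Module ℝ V] (E : ℕ → V →ₗ[ℝ] V)

theorem decayNorm_nonneg (ν : ℕ) (a : V) : 0 ≤ decayNorm E ν a :=
  add_nonneg (norm_nonneg a) (Real.iSup_nonneg fun _ => by positivity)

theorem sub_sub_apply_sub_eq_sub_max (hcomp : ∀ k l, (E k).comp (E l) = E (min k l))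
    (a : V) (k l : ℕ) : (a - E k a) - E l (a - E k a) = a - E (max k l) a := by
  rw [map_sub, ← LinearMap.comp_apply, hcomp]
  rcases le_total k l with h | h
  · rw [min_eq_right h, max_eq_right h]; abel
  · rw [min_eq_left h, max_eq_left h]; abel

theorem decayNorm_sub_le (hcomp : ∀ k l, (E k).comp (E l) = E (min k l)) {n : ℕ} {a : V}
    {C : ℝ} (hC : ∀ m : ℕ, ‖a - E m a‖ * (1 + (m : ℝ)) ^ (n + 1) ≤ C) (k : ℕ) :
    decayNorm E n (a - E k a) ≤ 2 * (C / (1 + k)) := by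
  have hC₀ : 0 ≤ C := (mul_nonneg (norm_nonneg _) (by positivity)).trans (hC 0)
  have hdecay (m : ℕ) : ‖a - E m a‖ * (1 + (m : ℝ)) ^ n ≤ C / (1 + m) :=
    mul_pow_le_div_of_mul_pow_succ_le (by positivity) (hC m)
  have hterm (l : ℕ) : ‖(a - E k a) - E l (a - E k a)‖ * (1 + (l : ℝ)) ^ n ≤ C / (1 + k) := by
    rw [sub_sub_apply_sub_eq_sub_max E hcomp]
    calc ‖a - E (max k l) a‖ * (1 + (l : ℝ)) ^ n
        ≤ ‖a - E (max k l) a‖ * (1 + ((max k l : ℕ) : ℝ)) ^ n := by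
          gcongr; exact le_max_right k l
      _ ≤ C / (1 + ((max k l : ℕ) : ℝ)) := hdecay _
      _ ≤ C / (1 + k) := by gcongr; exact le_max_left k l
  have hnorm : ‖a - E k a‖ ≤ C / (1 + k) :=
    (le_mul_of_one_le_right (norm_nonneg _) (one_le_pow₀ (by simp))).trans (hdecay k)
  unfold decayNorm
  linarith [ciSup_le hterm]

end DecayNorm

theorem stmt5_general {V : Type*} [NormedAddCommGroup V] [NormedSpace ℝ V]
    (E : ℕ → V →ₗ[ℝ] V)
    (hcomp : ∀ k l, (E k).comp (E l) = E (min k l))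
    (ν : ℕ) (hν : 1 ≤ ν) (a : V)
    (ha : BddAbove (Set.range fun k : ℕ => ‖a - E k a‖ * (1 + (k : ℝ)) ^ ν)) :
    Filter.Tendsto
      (fun k : ℕ => ‖a - E k a‖ +
        ⨆ l : ℕ, ‖(a - E k a) - E l (a - E k a)‖ * (1 + (l : ℝ)) ^ (ν - 1))
      Filter.atTop (nhds 0) := by
  obtain ⟨C, hC⟩ := ha
  obtain ⟨n, rfl⟩ := Nat.exists_eq_add_of_le' hν
  have hlim : Tendsto (fun k : ℕ => 2 * (C / (1 + (k : ℝ)))) atTop (𝓝 0) := by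
    simpa using ((tendsto_const_nhds (x := C)).div_atTop
      (tendsto_atTop_add_const_left _ 1 tendsto_natCast_atTop_atTop)).const_mul (2 : ℝ)
  simp only [Nat.add_sub_cancel]
  exact squeeze_zero (fun k => decayNorm_nonneg E n (a - E k a))
    (decayNorm_sub_le E hcomp fun m => hC ⟨m, rfl⟩) hlim

/-- If `‖A‖_ν < ∞` with `ν ≥ 1`, then `‖A − E_k A‖_{ν−1} → 0` as `k → ∞`, in the
abstract decay-norm framework with norm-one projections `E_k` satisfying
`E_k ∘ E_l = E_{min(k,l)}`. -/
theorem stmt5 {V : Type*} [NormedAddCommGroup V] [NormedSpace ℝ V]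
    (E : ℕ → V →ₗ[ℝ] V)
    (hcontr : ∀ k (a : V), ‖E k a‖ ≤ ‖a‖)
    (hcomp : ∀ k l, (E k).comp (E l) = E (min k l))
    (ν : ℕ) (hν : 1 ≤ ν) (a : V)
    (ha : BddAbove (Set.range fun k : ℕ => ‖a - E k a‖ * (1 + (k : ℝ)) ^ ν)) :
    Filter.Tendsto
      (fun k : ℕ => ‖a - E k a‖ +
        ⨆ l : ℕ, ‖(a - E k a) - E l (a - E k a)‖ * (1 + (l : ℝ)) ^ (ν - 1))
      Filter.atTop (nhds 0) :=
  stmt5_general E hcomp ν hν a ha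
end

section
/- Let (c_k)_{k∈ℕ} be a sequence of nonnegative reals. Then there exists a strictly positive, monotonically decreasing sequence (δ_k)_{k∈ℕ} with δ_k ≤ 2^{−k}, and for every n ∈ ℕ a constant C_n > 0, such that for all k, n ∈ ℕ and all ε with δ_{k+1} < |ε| ≤ δ_k one has c_k · |ε|^{k+1} ≤ C_n · |ε|^n. -/
/-!
Choose `δ k = 2⁻ᵏ / (1 + c 0 + ⋯ + c k)`, so that `c k * δ k ≤ 1`. Fix `n` and a point `x` of the
annulus `δ (k + 1) < x ≤ δ k`. For the finitely many `k < n`, `c k * x ^ (k + 1) ≤ c k` and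
`x ^ n > δ (k + 1) ^ n`, so `C n = 1 + ∑_{k < n} c k / δ (k + 1) ^ n` works. For `k ≥ n`,
`c k * x ^ (k + 1) ≤ (c k * x) * x ^ n ≤ x ^ n`.
-/

open Finset

lemma mul_pow_le_div_pow_mul_pow {c d x : ℝ} (m n : ℕ) (hc : 0 ≤ c) (hd : 0 < d)
    (hdx : d ≤ x) (hx : x ≤ 1) : c * x ^ m ≤ c / d ^ n * x ^ n :=
  calc c * x ^ m ≤ c := mul_le_of_le_one_right hc (pow_le_one₀ (hd.le.trans hdx) hx)
    _ = c / d ^ n * d ^ n := by field_simp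
    _ ≤ c / d ^ n * x ^ n := by gcongr

lemma mul_pow_succ_le_pow {c x : ℝ} {n k : ℕ} (hx₀ : 0 ≤ x) (hx₁ : x ≤ 1) (hcx : c * x ≤ 1)
    (hnk : n ≤ k) : c * x ^ (k + 1) ≤ x ^ n :=
  calc c * x ^ (k + 1) = c * x * x ^ k := by ring
    _ ≤ 1 * x ^ n :=
        mul_le_mul hcx (pow_le_pow_of_le_one hx₀ hx₁ hnk) (pow_nonneg hx₀ k) zero_le_one
    _ = x ^ n := one_mul _

theorem exists_mul_pow_le_on_annuli {c δ : ℕ → ℝ} (hc : ∀ k, 0 ≤ c k) (hδ₀ : ∀ k, 0 < δ k)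
    (hδ₁ : ∀ k, δ k ≤ 1) (hcδ : ∀ k, c k * δ k ≤ 1) (n : ℕ) :
    ∃ C : ℝ, 0 < C ∧ ∀ (k : ℕ) (x : ℝ), δ (k + 1) < x → x ≤ δ k →
      c k * x ^ (k + 1) ≤ C * x ^ n := by
  set C := 1 + ∑ j ∈ range n, c j / δ (j + 1) ^ n
  have hterm : ∀ j, 0 ≤ c j / δ (j + 1) ^ n := fun j => by
    have := hc j; have := hδ₀ (j + 1); positivity
  have hC : 1 ≤ C := le_add_of_nonneg_right (sum_nonneg fun j _ => hterm j)
  refine ⟨C, zero_lt_one.trans_le hC, fun k x hlow hupp => ?_⟩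
  have hx₀ : 0 ≤ x := (hδ₀ (k + 1)).le.trans hlow.le
  have hx₁ : x ≤ 1 := hupp.trans (hδ₁ k)
  rcases lt_or_ge k n with hkn | hnk
  · have hcoeff : c k / δ (k + 1) ^ n ≤ C :=
      (single_le_sum (fun j _ => hterm j) (mem_range.2 hkn)).trans
        (le_add_of_nonneg_left zero_le_one)
    calc c k * x ^ (k + 1) ≤ c k / δ (k + 1) ^ n * x ^ n :=
          mul_pow_le_div_pow_mul_pow _ _ (hc k) (hδ₀ (k + 1)) hlow.le hx₁
      _ ≤ C * x ^ n := by gcongr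
  · have hcx : c k * x ≤ 1 := (mul_le_mul_of_nonneg_left hupp (hc k)).trans (hcδ k)
    calc c k * x ^ (k + 1) ≤ x ^ n := mul_pow_succ_le_pow hx₀ hx₁ hcx hnk
      _ ≤ C * x ^ n := le_mul_of_one_le_left (pow_nonneg hx₀ n) hC

noncomputable def cutoffScale (c : ℕ → ℝ) (k : ℕ) : ℝ :=
  (1 / 2) ^ k / (1 + ∑ j ∈ range (k + 1), c j)

lemma cutoffScale_pos {c : ℕ → ℝ} (hc : ∀ k, 0 ≤ c k) (k : ℕ) : 0 < cutoffScale c k := by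
  have := sum_nonneg fun j (_ : j ∈ range (k + 1)) => hc j
  unfold cutoffScale; positivity

lemma cutoffScale_succ_le {c : ℕ → ℝ} (hc : ∀ k, 0 ≤ c k) (k : ℕ) :
    cutoffScale c (k + 1) ≤ cutoffScale c k := by
  have hsum := sum_nonneg fun j (_ : j ∈ range (k + 1)) => hc j
  have hden : 1 + ∑ j ∈ range (k + 1), c j ≤ 1 + ∑ j ∈ range (k + 2), c j := by
    rw [sum_range_succ _ (k + 1)]; linarith [hc (k + 1)]
  unfold cutoffScale
  exact div_le_div₀ (by positivity) (pow_le_pow_of_le_one (by norm_num) (by norm_num) k.le_succ)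
    (by linarith) hden

lemma cutoffScale_le_pow {c : ℕ → ℝ} (hc : ∀ k, 0 ≤ c k) (k : ℕ) :
    cutoffScale c k ≤ (1 / 2) ^ k := by
  have := sum_nonneg fun j (_ : j ∈ range (k + 1)) => hc j
  unfold cutoffScale
  exact div_le_self (by positivity) (by linarith)

lemma mul_cutoffScale_le_one {c : ℕ → ℝ} (hc : ∀ k, 0 ≤ c k) (k : ℕ) :
    c k * cutoffScale c k ≤ 1 := by
  have hck : c k ≤ ∑ j ∈ range (k + 1), c j :=
    single_le_sum (fun j _ => hc j) (self_mem_range_succ k)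
  unfold cutoffScale
  rw [mul_div_assoc', div_le_one (by linarith [hc k])]
  calc c k * (1 / 2) ^ k ≤ c k * 1 :=
        mul_le_mul_of_nonneg_left (pow_le_one₀ (by norm_num) (by norm_num)) (hc k)
    _ ≤ 1 + ∑ j ∈ range (k + 1), c j := by linarith

/-- Resummation lemma behind the `O(ε^∞)` construction of the NEASS: given
nonnegative constants `c_k`, there is a strictly positive decreasing sequence
`δ_k ≤ 2^{−k}` and, for every `n`, a constant `C_n > 0`, such that
`c_k |ε|^{k+1} ≤ C_n |ε|^n` whenever `δ_{k+1} < |ε| ≤ δ_k`. -/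
theorem stmt12 (c : ℕ → ℝ) (hc : ∀ k, 0 ≤ c k) :
    ∃ δ : ℕ → ℝ, (∀ k, 0 < δ k) ∧ (∀ k, δ (k + 1) ≤ δ k) ∧
      (∀ k, δ k ≤ (1 / 2 : ℝ) ^ k) ∧
      ∀ n : ℕ, ∃ C : ℝ, 0 < C ∧
        ∀ (k : ℕ) (ε : ℝ), δ (k + 1) < |ε| → |ε| ≤ δ k →
          c k * |ε| ^ (k + 1) ≤ C * |ε| ^ n := by
  have hδ₁ : ∀ k, cutoffScale c k ≤ 1 := fun k =>
    (cutoffScale_le_pow hc k).trans (pow_le_one₀ (by norm_num) (by norm_num))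
  refine ⟨cutoffScale c, cutoffScale_pos hc, cutoffScale_succ_le hc, cutoffScale_le_pow hc,
    fun n => ?_⟩
  obtain ⟨C, hC, hbound⟩ :=
    exists_mul_pow_le_on_annuli hc (cutoffScale_pos hc) hδ₁ (mul_cutoffScale_le_one hc) n
  exact ⟨C, hC, fun k ε => hbound k |ε|⟩
end
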